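/- For every θ ∈ ℝ, every y ∈ ℝ, and all integers a ≤ b, one has ∏_{k=a}^{b} |φ̃_θ(3^k y)|² ≤ min( ∏_{k=a}^{b} (7 + 2cos(3^k y (c₂(θ) − c₁(θ))))/9 , ∏_{k=a}^{b} (7 + 2cos(3^k y (c₃(θ) − c₁(θ))))/9 ). -/

import Mathlib

noncomputable def c₁ (θ : ℝ) : ℝ := Real.cos (θ - Real.pi / 2)
noncomputable def c₂ (θ : ℝ) : ℝ := Real.cos (θ - 7 * Real.pi / 6)
noncomputable def c₃ (θ : ℝ) : ℝ := Real.cos (θ + Real.pi / 6)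

/-- The normalized trigonometric polynomial `φ̃_θ(y) = (1/3)(e^{−ic₁y}+e^{−ic₂y}+e^{−ic₃y})`. -/
noncomputable def phiTilde (θ : ℝ) (y : ℝ) : ℂ :=
  (1 / 3) * (Complex.exp (-Complex.I * (c₁ θ : ℂ) * (y : ℂ)) +
    Complex.exp (-Complex.I * (c₂ θ : ℂ) * (y : ℂ)) +
    Complex.exp (-Complex.I * (c₃ θ : ℂ) * (y : ℂ)))

lemma abs_sq_three (α β γ : ℝ) :
    ‖Complex.exp ((α : ℂ) * Complex.I) + Complex.exp ((β : ℂ) * Complex.I) +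
      Complex.exp ((γ : ℂ) * Complex.I)‖ ^ 2 =
    3 + 2 * Real.cos (α - β) + 2 * Real.cos (α - γ) + 2 * Real.cos (β - γ) := by
  rw [Complex.sq_norm, Complex.normSq_apply]
  simp only [Complex.add_re, Complex.add_im, Complex.exp_ofReal_mul_I_re,
    Complex.exp_ofReal_mul_I_im, Real.cos_sub]
  nlinarith [Real.sin_sq_add_cos_sq α, Real.sin_sq_add_cos_sq β, Real.sin_sq_add_cos_sq γ]

lemma phiTilde_abs_sq (θ x : ℝ) :
    ‖phiTilde θ x‖ ^ 2 =
    (3 + 2 * Real.cos (x * (c₂ θ - c₁ θ)) + 2 * Real.cos (x * (c₃ θ - c₁ θ)) +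
      2 * Real.cos (x * (c₃ θ - c₂ θ))) / 9 := by
  have h : ∀ c : ℝ, -Complex.I * (c : ℂ) * (x : ℂ) = ((-(c * x) : ℝ) : ℂ) * Complex.I := by
    intro c; push_cast; ring
  rw [phiTilde, h, h, h, norm_mul, mul_pow, abs_sq_three]
  have e1 : -(c₁ θ * x) - -(c₂ θ * x) = x * (c₂ θ - c₁ θ) := by ring
  have e2 : -(c₁ θ * x) - -(c₃ θ * x) = x * (c₃ θ - c₁ θ) := by ring
  have e3 : -(c₂ θ * x) - -(c₃ θ * x) = x * (c₃ θ - c₂ θ) := by ring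
  rw [e1, e2, e3]
  simp
  ring

/-- Riesz-product bound: `∏ |φ̃_θ(3^k y)|²` is dominated by both Riesz products built
from the frequency differences `c₂−c₁` and `c₃−c₁`. -/
theorem riesz_product_bound (θ y : ℝ) (a b : ℤ) (hab : a ≤ b) :
    ∏ k ∈ Finset.Icc a b, ‖phiTilde θ ((3 : ℝ) ^ k * y)‖ ^ 2 ≤
      min
        (∏ k ∈ Finset.Icc a b,
          (7 + 2 * Real.cos ((3 : ℝ) ^ k * y * (c₂ θ - c₁ θ))) / 9)
        (∏ k ∈ Finset.Icc a b,
          (7 + 2 * Real.cos ((3 : ℝ) ^ k * y * (c₃ θ - c₁ θ))) / 9) := by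
  refine le_min ?_ ?_ <;>
  · refine Finset.prod_le_prod (fun k _ => by positivity) (fun k _ => ?_)
    rw [phiTilde_abs_sq]
    have h1 := Real.cos_le_one ((3 : ℝ) ^ k * y * (c₂ θ - c₁ θ))
    have h2 := Real.cos_le_one ((3 : ℝ) ^ k * y * (c₃ θ - c₁ θ))
    have h3 := Real.cos_le_one ((3 : ℝ) ^ k * y * (c₃ θ - c₂ θ))
    linarith
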